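/- Let d ≥ 2, 1 ≤ r ≤ d−1, and ρ_r = (1/r) Σ_{l=1}^r E_{ll}. Then for any k ∈ {1,…,d}: (i) for every index i with r < i ≤ d, the diagonal-entry variance of the C block of the covariant-measurement least squares estimator satisfies d · ∫_{U(d)} ⟨e_k, U*ρ_r U e_k⟩ · ((d+1)|U_{ik}|² − 1)² dU = d/(d+2); and (ii) if moreover r ≤ d−2, for all distinct indices i ≠ j with r < i, j ≤ d, the corresponding covariance satisfies d · ∫_{U(d)} ⟨e_k, U*ρ_r U e_k⟩ · ((d+1)|U_{ik}|² − 1)((d+1)|U_{jk}|² − 1) dU = −1/(d+2). -/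

import Mathlib

open MeasureTheory ProbabilityTheory Matrix
open scoped ComplexOrder

/-- The Borel (= product) σ-algebra on `d × d` complex matrices. -/
noncomputable instance matrixMeasurableSpace (d : ℕ) : MeasurableSpace (Matrix (Fin d) (Fin d) ℂ) :=
  MeasurableSpace.pi

/-- A density matrix: positive semidefinite with trace one. -/
def IsDensityMatrix {d : ℕ} (ρ : Matrix (Fin d) (Fin d) ℂ) : Prop :=
  ρ.PosSemidef ∧ ρ.trace = 1

/-- The rank-one projection `U E_{jj} U*`. -/
noncomputable def covProj (d : ℕ) (j : Fin d) (U : Matrix.unitaryGroup (Fin d) ℂ) :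
    Matrix (Fin d) (Fin d) ℂ :=
  (U : Matrix (Fin d) (Fin d) ℂ) * Matrix.single j j 1 *
    star (U : Matrix (Fin d) (Fin d) ℂ)

/-- The outcome law `μ_ρ` of the covariant measurement on the state `ρ`, built from the Haar
probability measure `μ` on the unitary group: the distribution of `U E_{JJ} U*` where `U ~ μ`
and, conditionally on `U`, `J = j` has probability `⟨e_j, U* ρ U e_j⟩`. -/
noncomputable def covariantLaw (d : ℕ) (μ : Measure (Matrix.unitaryGroup (Fin d) ℂ))
    (ρ : Matrix (Fin d) (Fin d) ℂ) : Measure (Matrix (Fin d) (Fin d) ℂ) :=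
  Measure.sum fun j : Fin d =>
    Measure.map (covProj d j)
      (μ.withDensity fun U =>
        ENNReal.ofReal
          ((star (U : Matrix (Fin d) (Fin d) ℂ) * ρ * (U : Matrix (Fin d) (Fin d) ℂ)) j j).re)

/-- The least squares estimator `ρ̂_LS = (1/N) Σ_i ((d+1) P_i - I)`. -/
noncomputable def lsEst {Ω : Type*} (d N : ℕ) (P : Fin N → Ω → Matrix (Fin d) (Fin d) ℂ)
    (ω : Ω) : Matrix (Fin d) (Fin d) ℂ :=
  (N : ℂ)⁻¹ • ∑ i, ((d + 1 : ℂ) • P i ω - 1)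

/-- Squared Frobenius norm `‖A‖₂² = Tr(A* A)`. -/
noncomputable def frobSq {d : ℕ} (A : Matrix (Fin d) (Fin d) ℂ) : ℝ :=
  (Matrix.trace (Aᴴ * A)).re

/-- Frobenius norm `‖A‖₂ = (Tr(A* A))^{1/2}`. -/
noncomputable def frobNorm {d : ℕ} (A : Matrix (Fin d) (Fin d) ℂ) : ℝ :=
  Real.sqrt (Matrix.trace (Aᴴ * A)).re

/-- Operator norm (largest singular value) of a matrix, as the `ℓ² → ℓ²` operator norm. -/
noncomputable def opNorm {d : ℕ} (A : Matrix (Fin d) (Fin d) ℂ) : ℝ :=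
  ‖LinearMap.toContinuousLinearMap (Matrix.toEuclideanLin A)‖

/-- Trace norm `‖A‖₁ = Tr|A|`: the sum of the singular values of `A`. -/
noncomputable def traceNorm {d : ℕ} (A : Matrix (Fin d) (Fin d) ℂ) : ℝ :=
  ∑ i, Real.sqrt ((Matrix.posSemidef_conjTranspose_mul_self A).1.eigenvalues i)

/-- The rank-`r` density matrix `ρ_r = (1/r) Σ_{i=1}^r E_{ii}`. -/
noncomputable def rhoR (d r : ℕ) : Matrix (Fin d) (Fin d) ℂ :=
  (r : ℂ)⁻¹ • ∑ i : Fin d, if (i : ℕ) < r then Matrix.single i i 1 else 0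


/-! The weights `x_a = |U_{ak}|²` of the `k`-th column of a Haar unitary form a random
probability vector whose law is invariant under left multiplication by unitaries. Permutation
matrices show that the moments `E[x_a]`, `E[x_a x_b]`, `E[x_a² x_b]`, `E[x_a x_b x_c]` only depend on
which indices coincide, and `∑_c x_c = 1` gives one linear relation between the moments of each
degree. One more relation per degree comes from Householder reflections mixing the coordinates
`a` and `b`: averaging over the phases `z ∈ {1, i, -1, -i}` kills the interference terms and gives
`E[x_a²] = 2 E[x_a x_b]` and `E[x_a³] = 3 E[x_a² x_b]`. Solving,
`E[x_a] = 1/d`, `E[x_a x_b] = 1/(d(d+1))`, `E[x_a² x_b] = 2/(d(d+1)(d+2))` and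
`E[x_a x_b x_c] = 1/(d(d+1)(d+2))`. Finally `⟨e_k, U* ρ_r U e_k⟩ = (1/r) ∑_{l ≤ r} x_l`, so both
integrals are averages over `l ≤ r < i, j` of cubic polynomials in these moments. -/

open Complex

section UnitaryMatrices

variable {n R : Type*} [Fintype n] [DecidableEq n]

def householder [Ring R] [StarRing R] (w : n → R) : Matrix n n R :=
  1 - 2 * vecMulVec w (star w)

theorem householder_mem_unitaryGroup [CommRing R] [StarRing R] {w : n → R}
    (hw : star w ⬝ᵥ w = 1) : householder w ∈ unitaryGroup n R := by
  set P := vecMulVec w (star w)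
  have hPP : P * P = P := by rw [vecMulVec_mul_vecMulVec, hw, one_smul]
  have hP : star P = P := by simp [P, star_eq_conjTranspose]
  rw [householder, mem_unitaryGroup_iff', star_sub, star_one, star_mul, hP, star_ofNat]
  calc (1 - P * 2) * (1 - 2 * P) = 1 - 4 * P + 4 * (P * P) := by noncomm_ring
    _ = 1 := by rw [hPP]; noncomm_ring

theorem householder_mul_apply [CommRing R] [StarRing R] (w : n → R) (U : Matrix n n R)
    (a k : n) : (householder w * U) a k = U a k - 2 * w a * ∑ c, star (w c) * U c k := by
  rw [householder, sub_mul, one_mul, Matrix.sub_apply, two_mul, add_mul, Matrix.add_apply,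
    vecMulVec_mul, vecMulVec_apply, vecMul, dotProduct]
  simp only [Pi.star_apply]
  ring

theorem permMatrix_mem_unitaryGroup [CommRing R] [StarRing R] (σ : Equiv.Perm n) :
    σ.permMatrix R ∈ unitaryGroup n R := by
  rw [mem_unitaryGroup_iff', star_eq_conjTranspose, conjTranspose_permMatrix, ← permMatrix_mul,
    mul_inv_cancel, permMatrix_one]

variable {a b : n}

theorem star_single_sub_single_dotProduct [CommRing R] [StarRing R] (hab : a ≠ b) (x y : R) :
    star (Pi.single a x - Pi.single b y) ⬝ᵥ (Pi.single a x - Pi.single b y) =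
      star x * x + star y * y := by
  simp [dotProduct_sub, hab, hab.symm, Pi.star_single]

theorem householder_single_sub_single_mul_apply [CommRing R] [StarRing R] (hab : a ≠ b) (x y : R)
    (U : Matrix n n R) (k : n) :
    (householder (Pi.single a x - Pi.single b y) * U : Matrix n n R) a k =
      U a k - 2 * x * (star x * U a k - star y * U b k) := by
  rw [householder_mul_apply]
  simp [sub_mul, Finset.sum_sub_distrib, hab, Pi.single_apply, apply_ite star, ite_mul]

/- The Pythagorean coefficients `3/5, 4/5` make the reflection mix the coordinates `a` and `b`
with the rational weights `7/25, 24/25`; any genuine mixing would do. -/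
noncomputable def mixingVector (a b : n) (z : ℂ) : n → ℂ :=
  Pi.single a (3 / 5) - Pi.single b (4 / 5 * star z)

theorem star_mixingVector_dotProduct (hab : a ≠ b) {z : ℂ} (hz : ‖z‖ = 1) :
    star (mixingVector a b z) ⬝ᵥ mixingVector a b z = 1 := by
  have hz' : star z * z = 1 := by rw [RCLike.star_def, conj_mul', hz]; norm_num
  rw [mixingVector, star_single_sub_single_dotProduct hab, star_mul', star_star]
  simp only [star_div₀, star_ofNat]
  linear_combination (16 / 25 : ℂ) * hz'

theorem householder_mixingVector_mul_apply (hab : a ≠ b) (z : ℂ) (U : Matrix n n ℂ) (k : n) :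
    (householder (mixingVector a b z) * U : Matrix n n ℂ) a k =
      ((7 / 25 : ℝ) : ℂ) * U a k + ((24 / 25 : ℝ) : ℂ) * z * U b k := by
  rw [mixingVector, householder_single_sub_single_mul_apply hab, star_mul', star_star]
  simp only [star_div₀, star_ofNat]
  push_cast
  ring

end UnitaryMatrices

section FourthRootsOfUnity

theorem sum_fourthRoots {M : Type*} [AddCommMonoid M] (f : ℂ → M) :
    ∑ m : Fin 4, f (I ^ (m : ℕ)) = f 1 + f I + f (-1) + f (-I) := by
  simp [Fin.sum_univ_four, pow_succ]

variable (c s : ℝ) (u v : ℂ)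

theorem sum_fourthRoots_normSq_sq :
    ∑ m : Fin 4, (‖(c : ℂ) * u + s * I ^ (m : ℕ) * v‖ ^ 2) ^ 2 =
      4 * c ^ 4 * (‖u‖ ^ 2) ^ 2 + 4 * s ^ 4 * (‖v‖ ^ 2) ^ 2
        + 16 * c ^ 2 * s ^ 2 * (‖u‖ ^ 2 * ‖v‖ ^ 2) := by
  rw [sum_fourthRoots fun z => (‖(c : ℂ) * u + s * z * v‖ ^ 2) ^ 2]
  simp only [Complex.sq_norm, normSq_apply, add_re, add_im, mul_re, mul_im, ofReal_re, ofReal_im,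
    I_re, I_im, one_re, one_im, neg_re, neg_im]
  ring

theorem sum_fourthRoots_normSq_cube :
    ∑ m : Fin 4, (‖(c : ℂ) * u + s * I ^ (m : ℕ) * v‖ ^ 2) ^ 3 =
      4 * c ^ 6 * (‖u‖ ^ 2) ^ 3 + 4 * s ^ 6 * (‖v‖ ^ 2) ^ 3
        + 36 * c ^ 4 * s ^ 2 * ((‖u‖ ^ 2) ^ 2 * ‖v‖ ^ 2)
        + 36 * c ^ 2 * s ^ 4 * ((‖v‖ ^ 2) ^ 2 * ‖u‖ ^ 2) := by
  rw [sum_fourthRoots fun z => (‖(c : ℂ) * u + s * z * v‖ ^ 2) ^ 3]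
  simp only [Complex.sq_norm, normSq_apply, add_re, add_im, mul_re, mul_im, ofReal_re, ofReal_im,
    I_re, I_im, one_re, one_im, neg_re, neg_im]
  ring

end FourthRootsOfUnity

theorem Continuous.integrable_of_compactSpace {α E : Type*} [TopologicalSpace α]
    [MeasurableSpace α] [OpensMeasurableSpace α] [CompactSpace α] [NormedAddCommGroup E]
    {μ : Measure α} [IsFiniteMeasure μ] {f : α → E} (hf : Continuous f) : Integrable f μ := by
  obtain ⟨C, hC⟩ := isCompact_univ.exists_bound_of_continuousOn hf.continuousOn
  exact .of_bound hf.aestronglyMeasurable_of_compactSpace C (.of_forall fun x => hC x trivial)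

theorem sum_eq_sum_add_card_compl_mul {ι M : Type*} [Fintype ι] [DecidableEq ι] [Ring M]
    (s : Finset ι) {f : ι → M} {v : M} (h : ∀ c ∉ s, f c = v) :
    ∑ c, f c = ∑ c ∈ s, f c + ((Fintype.card ι : M) - s.card) * v := by
  rw [← Finset.sum_add_sum_compl s f, Finset.sum_congr rfl fun c hc => h c (Finset.mem_compl.1 hc),
    Finset.sum_const, Finset.card_compl, nsmul_eq_mul, Nat.cast_sub (Finset.card_le_univ s)]

theorem rhoR_eq_diagonal (d r : ℕ) :
    rhoR d r = diagonal fun i : Fin d => if (i : ℕ) < r then (r : ℂ)⁻¹ else 0 := by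
  rw [rhoR, ← sum_single_eq_diagonal, Finset.smul_sum]
  refine Finset.sum_congr rfl fun i _ => ?_
  split_ifs <;> simp [smul_single]

variable {d : ℕ}

instance : BorelSpace (Matrix (Fin d) (Fin d) ℂ) :=
  inferInstanceAs (BorelSpace (Fin d → Fin d → ℂ))

instance : CompactSpace (unitaryGroup (Fin d) ℂ) :=
  isCompact_iff_compactSpace.mp <|
    (isCompact_univ_pi fun _ => isCompact_univ_pi fun _ => isCompact_closedBall (0 : ℂ) 1)
      |>.of_isClosed_subset (isClosed_unitary (R := Matrix (Fin d) (Fin d) ℂ))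
        fun U hU i _ j _ => by simpa using entry_norm_bound_of_unitary hU i j

@[fun_prop]
theorem continuous_unitaryGroup_apply (a b : Fin d) :
    Continuous fun U : unitaryGroup (Fin d) ℂ => (U : Matrix (Fin d) (Fin d) ℂ) a b :=
  continuous_subtype_val.matrix_elem a b

noncomputable def colWeights (k : Fin d) (U : unitaryGroup (Fin d) ℂ) (a : Fin d) : ℝ :=
  ‖(U : Matrix (Fin d) (Fin d) ℂ) a k‖ ^ 2

noncomputable def mixedWeight (k a b : Fin d) (z : ℂ) (U : unitaryGroup (Fin d) ℂ) : ℝ :=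
  ‖((7 / 25 : ℝ) : ℂ) * (U : Matrix (Fin d) (Fin d) ℂ) a k
    + ((24 / 25 : ℝ) : ℂ) * z * (U : Matrix (Fin d) (Fin d) ℂ) b k‖ ^ 2

section ColumnWeights

variable (k : Fin d)

@[fun_prop]
theorem continuous_colWeights (a : Fin d) : Continuous fun U => colWeights k U a := by
  unfold colWeights; fun_prop

theorem sum_colWeights (U : unitaryGroup (Fin d) ℂ) : ∑ a, colWeights k U a = 1 := by
  have h := congr_fun (congr_fun (mem_unitaryGroup_iff'.mp U.2) k) k
  simp only [mul_apply, star_apply, one_apply_eq, RCLike.star_def, conj_mul'] at h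
  exact_mod_cast h

theorem colWeights_permMatrix_mul (σ : Equiv.Perm (Fin d)) (U : unitaryGroup (Fin d) ℂ) :
    colWeights k (⟨σ.permMatrix ℂ, permMatrix_mem_unitaryGroup σ⟩ * U) = colWeights k U ∘ σ := by
  ext a
  simp [colWeights, PEquiv.toMatrix_toPEquiv_mul]

theorem colWeights_householder_mul {a b : Fin d} (hab : a ≠ b) {z : ℂ} (hz : ‖z‖ = 1)
    (U : unitaryGroup (Fin d) ℂ) :
    colWeights k (⟨householder (mixingVector a b z),
        householder_mem_unitaryGroup (star_mixingVector_dotProduct hab hz)⟩ * U) a =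
      mixedWeight k a b z U :=
  congrArg (· ^ 2) (congrArg norm (householder_mixingVector_mul_apply hab z _ k))

theorem re_star_mul_rhoR_mul_apply (r : ℕ) (U : unitaryGroup (Fin d) ℂ) :
    ((star (U : Matrix (Fin d) (Fin d) ℂ) * rhoR d r * (U : Matrix (Fin d) (Fin d) ℂ)) k k).re =
      (r : ℝ)⁻¹ * ∑ l ∈ Finset.univ.filter fun l : Fin d => (l : ℕ) < r, colWeights k U l := by
  rw [rhoR_eq_diagonal, mul_apply, re_sum, Finset.sum_filter, Finset.mul_sum]
  refine Finset.sum_congr rfl fun l _ => ?_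
  rw [mul_diagonal, star_apply]
  split_ifs
  · rw [mul_right_comm, RCLike.star_def, conj_mul', colWeights, mul_comm]
    norm_cast
    rw [← ofReal_natCast, ← ofReal_inv, re_ofReal_mul, ofReal_re]
  · simp

end ColumnWeights

section Integrals

variable (k : Fin d) {μ : Measure (unitaryGroup (Fin d) ℂ)}

theorem sum_integral_mul_colWeights [IsFiniteMeasure μ] {G : unitaryGroup (Fin d) ℂ → ℝ}
    (hG : Continuous G) : ∑ c, ∫ U, G U * colWeights k U c ∂μ = ∫ U, G U ∂μ := by
  rw [← integral_finsetSum _ fun c _ => Continuous.integrable_of_compactSpace (by fun_prop)]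
  simp only [← Finset.mul_sum, sum_colWeights, mul_one]

theorem integral_re_star_mul_rhoR_mul_apply_mul [IsFiniteMeasure μ] {r : ℕ} (hr : r ≠ 0)
    (hrd : r ≤ d) {G : unitaryGroup (Fin d) ℂ → ℝ} (hG : Continuous G) {v : ℝ}
    (hv : ∀ l : Fin d, (l : ℕ) < r → ∫ U, colWeights k U l * G U ∂μ = v) :
    ∫ U, ((star (U : Matrix (Fin d) (Fin d) ℂ) * rhoR d r * (U : Matrix (Fin d) (Fin d) ℂ)) k k).re
      * G U ∂μ = v := by
  simp_rw [re_star_mul_rhoR_mul_apply, mul_assoc, Finset.sum_mul]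
  rw [integral_const_mul, integral_finsetSum _ fun l _ =>
      Continuous.integrable_of_compactSpace (by fun_prop),
    Finset.sum_congr rfl fun l hl => hv l (Finset.mem_filter.1 hl).2, Finset.sum_const,
    Fin.card_filter_val_lt, min_eq_right hrd, nsmul_eq_mul]
  field_simp

variable [μ.IsMulLeftInvariant]

theorem integral_comp_colWeights_perm (σ : Equiv.Perm (Fin d)) (G : (Fin d → ℝ) → ℝ) :
    ∫ U, G (colWeights k U ∘ σ) ∂μ = ∫ U, G (colWeights k U) ∂μ := by
  simpa only [colWeights_permMatrix_mul] using
    integral_mul_left_eq_self (μ := μ) (fun U => G (colWeights k U))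
      ⟨σ.permMatrix ℂ, permMatrix_mem_unitaryGroup σ⟩

section FiniteMeasure

variable [IsFiniteMeasure μ] {a b : Fin d}

theorem integral_sum_fourthRoots_mixedWeight (hab : a ≠ b) {G : ℝ → ℝ} (hG : Continuous G) :
    ∫ U, ∑ m : Fin 4, G (mixedWeight k a b (I ^ (m : ℕ)) U) ∂μ =
      4 * ∫ U, G (colWeights k U a) ∂μ := by
  rw [integral_finsetSum _ fun m _ => Continuous.integrable_of_compactSpace
    (by unfold mixedWeight; fun_prop)]
  have hI (m : ℕ) : ‖I ^ m‖ = 1 := by simp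
  simp only [← colWeights_householder_mul k hab (hI _),
    integral_mul_left_eq_self (fun U => G (colWeights k U a))]
  simp

theorem integral_colWeights_sq (hab : a ≠ b) :
    ∫ U, colWeights k U a ^ 2 ∂μ = 2 * ∫ U, colWeights k U a * colWeights k U b ∂μ := by
  have h := integral_sum_fourthRoots_mixedWeight k (μ := μ) hab (continuous_pow 2)
  have hpt : ∀ U, ∑ m : Fin 4, mixedWeight k a b (I ^ (m : ℕ)) U ^ 2 =
      4 * (7 / 25) ^ 4 * colWeights k U a ^ 2 + 4 * (24 / 25) ^ 4 * colWeights k U b ^ 2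
        + 16 * (7 / 25) ^ 2 * (24 / 25) ^ 2 * (colWeights k U a * colWeights k U b) :=
    fun U => sum_fourthRoots_normSq_sq _ _ _ _
  have hsym : ∫ U, colWeights k U b ^ 2 ∂μ = ∫ U, colWeights k U a ^ 2 ∂μ := by
    simpa using integral_comp_colWeights_perm k (Equiv.swap a b) (μ := μ) (fun v => v a ^ 2)
  simp only [hpt] at h
  simp (disch := exact Continuous.integrable_of_compactSpace (by fun_prop)) only
    [integral_add, integral_const_mul, hsym] at h
  linarith

theorem integral_colWeights_cube (hab : a ≠ b) :
    ∫ U, colWeights k U a ^ 3 ∂μ = 3 * ∫ U, colWeights k U a ^ 2 * colWeights k U b ∂μ := by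
  have h := integral_sum_fourthRoots_mixedWeight k (μ := μ) hab (continuous_pow 3)
  have hpt : ∀ U, ∑ m : Fin 4, mixedWeight k a b (I ^ (m : ℕ)) U ^ 3 =
      4 * (7 / 25) ^ 6 * colWeights k U a ^ 3 + 4 * (24 / 25) ^ 6 * colWeights k U b ^ 3
        + 36 * (7 / 25) ^ 4 * (24 / 25) ^ 2 * (colWeights k U a ^ 2 * colWeights k U b)
        + 36 * (7 / 25) ^ 2 * (24 / 25) ^ 4 * (colWeights k U b ^ 2 * colWeights k U a) :=
    fun U => sum_fourthRoots_normSq_cube _ _ _ _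
  have hsym3 : ∫ U, colWeights k U b ^ 3 ∂μ = ∫ U, colWeights k U a ^ 3 ∂μ := by
    simpa using integral_comp_colWeights_perm k (Equiv.swap a b) (μ := μ) (fun v => v a ^ 3)
  have hsym21 : ∫ U, colWeights k U b ^ 2 * colWeights k U a ∂μ =
      ∫ U, colWeights k U a ^ 2 * colWeights k U b ∂μ := by
    simpa using
      integral_comp_colWeights_perm k (Equiv.swap a b) (μ := μ) (fun v => v a ^ 2 * v b)
  simp only [hpt] at h
  simp (disch := exact Continuous.integrable_of_compactSpace (by fun_prop)) only
    [integral_add, integral_const_mul, hsym3, hsym21] at h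
  linarith

end FiniteMeasure

variable [IsProbabilityMeasure μ]

theorem integral_colWeights (a : Fin d) : ∫ U, colWeights k U a ∂μ = 1 / d := by
  have h := sum_integral_mul_colWeights k (μ := μ) (G := fun _ => 1) continuous_const
  have hsym (c : Fin d) : ∫ U, colWeights k U c ∂μ = ∫ U, colWeights k U a ∂μ := by
    simpa using integral_comp_colWeights_perm k (Equiv.swap a c) (μ := μ) (fun v => v a)
  simp only [one_mul, hsym, Finset.sum_const, Finset.card_univ, Fintype.card_fin, nsmul_eq_mul,
    integral_const, probReal_univ, smul_eq_mul, mul_one] at h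
  have hd : (d : ℝ) ≠ 0 := by exact_mod_cast a.pos.ne'
  field_simp
  linarith

theorem integral_colWeights_mul {a b : Fin d} (hab : a ≠ b) :
    ∫ U, colWeights k U a * colWeights k U b ∂μ = 1 / (d * (d + 1)) := by
  have h := sum_integral_mul_colWeights k (μ := μ) (continuous_colWeights k a)
  have hsym (c : Fin d) (hc : c ∉ ({a} : Finset (Fin d))) :
      ∫ U, colWeights k U a * colWeights k U c ∂μ =
        ∫ U, colWeights k U a * colWeights k U b ∂μ := by
    rw [Finset.mem_singleton] at hc
    simpa [Equiv.swap_apply_of_ne_of_ne (Ne.symm hc) hab] using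
      (integral_comp_colWeights_perm k (Equiv.swap c b) (μ := μ) (fun v => v a * v c)).symm
  rw [sum_eq_sum_add_card_compl_mul _ hsym, Finset.sum_singleton] at h
  simp only [← sq] at h
  rw [integral_colWeights_sq k hab, integral_colWeights, Fintype.card_fin, Finset.card_singleton,
    Nat.cast_one] at h
  have hd : (d : ℝ) ≠ 0 := by exact_mod_cast a.pos.ne'
  field_simp at h ⊢
  linear_combination h

theorem integral_colWeights_sq_mul {a b : Fin d} (hab : a ≠ b) :
    ∫ U, colWeights k U a ^ 2 * colWeights k U b ∂μ = 2 / (d * (d + 1) * (d + 2)) := by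
  have h := sum_integral_mul_colWeights k (μ := μ) (G := fun U => colWeights k U a ^ 2)
    (by fun_prop)
  have hsym (c : Fin d) (hc : c ∉ ({a} : Finset (Fin d))) :
      ∫ U, colWeights k U a ^ 2 * colWeights k U c ∂μ =
        ∫ U, colWeights k U a ^ 2 * colWeights k U b ∂μ := by
    rw [Finset.mem_singleton] at hc
    simpa [Equiv.swap_apply_of_ne_of_ne (Ne.symm hc) hab] using
      (integral_comp_colWeights_perm k (Equiv.swap c b) (μ := μ) (fun v => v a ^ 2 * v c)).symm
  rw [sum_eq_sum_add_card_compl_mul _ hsym, Finset.sum_singleton] at h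
  simp only [← pow_succ] at h
  rw [integral_colWeights_cube k hab, integral_colWeights_sq k hab, integral_colWeights_mul k hab,
    Fintype.card_fin, Finset.card_singleton, Nat.cast_one] at h
  have hd : (d : ℝ) ≠ 0 := by exact_mod_cast a.pos.ne'
  field_simp at h ⊢
  linear_combination h

theorem integral_colWeights_mul_mul {a b c : Fin d} (hab : a ≠ b) (hac : a ≠ c) (hbc : b ≠ c) :
    ∫ U, colWeights k U a * colWeights k U b * colWeights k U c ∂μ =
      1 / (d * (d + 1) * (d + 2)) := by
  have h := sum_integral_mul_colWeights k (μ := μ)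
    (G := fun U => colWeights k U a * colWeights k U b) (by fun_prop)
  have hsym (e : Fin d) (he : e ∉ ({a, b} : Finset (Fin d))) :
      ∫ U, colWeights k U a * colWeights k U b * colWeights k U e ∂μ =
        ∫ U, colWeights k U a * colWeights k U b * colWeights k U c ∂μ := by
    simp only [Finset.mem_insert, Finset.mem_singleton, not_or] at he
    simpa [Equiv.swap_apply_of_ne_of_ne (Ne.symm he.1) hac,
      Equiv.swap_apply_of_ne_of_ne (Ne.symm he.2) hbc] using
      (integral_comp_colWeights_perm k (Equiv.swap e c) (μ := μ) (fun v => v a * v b * v e)).symm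
  have haba : ∫ U, colWeights k U a * colWeights k U b * colWeights k U a ∂μ =
      2 / (d * (d + 1) * (d + 2)) := by
    rw [← integral_colWeights_sq_mul k (μ := μ) hab]; congr 1; ext; ring
  have habb : ∫ U, colWeights k U a * colWeights k U b * colWeights k U b ∂μ =
      2 / (d * (d + 1) * (d + 2)) := by
    rw [← integral_colWeights_sq_mul k (μ := μ) hab.symm]; congr 1; ext; ring
  rw [sum_eq_sum_add_card_compl_mul _ hsym, Finset.sum_pair hab, haba, habb,
    integral_colWeights_mul k hab, Fintype.card_fin, Finset.card_pair hab] at h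
  have hd : 3 ≤ d := by
    simpa [Finset.card_insert_of_notMem, hab, hac, hbc] using
      Finset.card_le_univ ({a, b, c} : Finset (Fin d))
  have hd2 : (d : ℝ) - 2 ≠ 0 := by
    have : (3 : ℝ) ≤ d := by exact_mod_cast hd
    linarith
  have hd0 : (d : ℝ) ≠ 0 := by positivity
  push_cast at h
  field_simp at h ⊢
  apply mul_left_cancel₀ hd2
  linear_combination h

theorem integral_colWeights_mul_affine_sq {l i : Fin d} (hli : l ≠ i) :
    ∫ U, colWeights k U l * (((d : ℝ) + 1) * colWeights k U i - 1) ^ 2 ∂μ =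
      1 / ((d : ℝ) + 2) := by
  have hpt (U : unitaryGroup (Fin d) ℂ) :
      colWeights k U l * (((d : ℝ) + 1) * colWeights k U i - 1) ^ 2 =
        (d + 1) ^ 2 * (colWeights k U i ^ 2 * colWeights k U l)
          - 2 * (d + 1) * (colWeights k U l * colWeights k U i) + colWeights k U l := by ring
  simp only [hpt]
  simp (disch := exact Continuous.integrable_of_compactSpace (by fun_prop)) only
    [integral_add, integral_sub, integral_const_mul]
  rw [integral_colWeights_sq_mul k hli.symm, integral_colWeights_mul k hli, integral_colWeights]
  have hd : (d : ℝ) ≠ 0 := by exact_mod_cast l.pos.ne'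
  field_simp
  ring

theorem integral_colWeights_mul_affine_mul_affine {l i j : Fin d} (hli : l ≠ i) (hlj : l ≠ j)
    (hij : i ≠ j) :
    ∫ U, colWeights k U l *
        ((((d : ℝ) + 1) * colWeights k U i - 1) * (((d : ℝ) + 1) * colWeights k U j - 1)) ∂μ =
      -1 / (d * (d + 2)) := by
  have hpt (U : unitaryGroup (Fin d) ℂ) :
      colWeights k U l *
          ((((d : ℝ) + 1) * colWeights k U i - 1) * (((d : ℝ) + 1) * colWeights k U j - 1)) =
        (d + 1) ^ 2 * (colWeights k U l * colWeights k U i * colWeights k U j)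
          - (d + 1) * (colWeights k U l * colWeights k U i)
          - (d + 1) * (colWeights k U l * colWeights k U j) + colWeights k U l := by ring
  simp only [hpt]
  simp (disch := exact Continuous.integrable_of_compactSpace (by fun_prop)) only
    [integral_add, integral_sub, integral_const_mul]
  rw [integral_colWeights_mul_mul k hli hlj hij, integral_colWeights_mul k hli,
    integral_colWeights_mul k hlj, integral_colWeights]
  have hd : (d : ℝ) ≠ 0 := by exact_mod_cast l.pos.ne'
  field_simp
  ring

end Integrals

theorem covariant_ls_C_diagonal_variance_covariance_general
    (d r : ℕ) (hr : 1 ≤ r) (hrd : r < d)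
    (μ : Measure (Matrix.unitaryGroup (Fin d) ℂ)) [IsProbabilityMeasure μ]
    (hμ : ∀ V : Matrix.unitaryGroup (Fin d) ℂ, μ.map (fun U => V * U) = μ)
    (k : Fin d) :
    (∀ i : Fin d, r ≤ (i : ℕ) →
      (d : ℝ) * ∫ U,
          ((star (U : Matrix (Fin d) (Fin d) ℂ) * rhoR d r * (U : Matrix (Fin d) (Fin d) ℂ)) k k).re *
          (((d : ℝ) + 1) * ‖(U : Matrix (Fin d) (Fin d) ℂ) i k‖ ^ 2 - 1) ^ 2 ∂μ
        = (d : ℝ) / ((d : ℝ) + 2)) ∧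
    (r + 2 ≤ d → ∀ i j : Fin d, i ≠ j → r ≤ (i : ℕ) → r ≤ (j : ℕ) →
      (d : ℝ) * ∫ U,
          ((star (U : Matrix (Fin d) (Fin d) ℂ) * rhoR d r * (U : Matrix (Fin d) (Fin d) ℂ)) k k).re *
          ((((d : ℝ) + 1) * ‖(U : Matrix (Fin d) (Fin d) ℂ) i k‖ ^ 2 - 1) *
            (((d : ℝ) + 1) * ‖(U : Matrix (Fin d) (Fin d) ℂ) j k‖ ^ 2 - 1)) ∂μ
        = -1 / ((d : ℝ) + 2)) := by
  have : μ.IsMulLeftInvariant := ⟨hμ⟩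
  have hr0 : r ≠ 0 := by omega
  have hd0 : (d : ℝ) ≠ 0 := by exact_mod_cast k.pos.ne'
  refine ⟨fun i hi => ?_, fun _ i j hij hi hj => ?_⟩
  · change (d : ℝ) * ∫ U, _ * (((d : ℝ) + 1) * colWeights k U i - 1) ^ 2 ∂μ = _
    rw [integral_re_star_mul_rhoR_mul_apply_mul k hr0 hrd.le (by fun_prop) fun l hl =>
      integral_colWeights_mul_affine_sq k (Fin.ne_of_val_ne (by omega))]
    field_simp
  · change (d : ℝ) * ∫ U, _ * ((((d : ℝ) + 1) * colWeights k U i - 1) *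
      (((d : ℝ) + 1) * colWeights k U j - 1)) ∂μ = _
    rw [integral_re_star_mul_rhoR_mul_apply_mul k hr0 hrd.le (by fun_prop) fun l hl =>
      integral_colWeights_mul_affine_mul_affine k (Fin.ne_of_val_ne (by omega))
        (Fin.ne_of_val_ne (by omega)) hij]
    field_simp

/-- Diagonal variance and covariance of the `C` block of the
covariant-measurement LS estimator for `ρ_r`: for `r < i ≤ d`,
`d·∫ ⟨e_k, U*ρ_r U e_k⟩·((d+1)|U_{ik}|² − 1)² dU = d/(d+2)`, and for distinct
`r < i, j ≤ d` (when `r ≤ d−2`),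
`d·∫ ⟨e_k, U*ρ_r U e_k⟩·((d+1)|U_{ik}|² − 1)((d+1)|U_{jk}|² − 1) dU = −1/(d+2)`. -/
theorem covariant_ls_C_diagonal_variance_covariance
    (d r : ℕ) (hd : 2 ≤ d) (hr : 1 ≤ r) (hrd : r < d)
    (μ : Measure (Matrix.unitaryGroup (Fin d) ℂ)) [IsProbabilityMeasure μ]
    (hμ : ∀ V : Matrix.unitaryGroup (Fin d) ℂ, μ.map (fun U => V * U) = μ)
    (k : Fin d) :
    (∀ i : Fin d, r ≤ (i : ℕ) →
      (d : ℝ) * ∫ U,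
          ((star (U : Matrix (Fin d) (Fin d) ℂ) * rhoR d r * (U : Matrix (Fin d) (Fin d) ℂ)) k k).re *
          (((d : ℝ) + 1) * ‖(U : Matrix (Fin d) (Fin d) ℂ) i k‖ ^ 2 - 1) ^ 2 ∂μ
        = (d : ℝ) / ((d : ℝ) + 2)) ∧
    (r + 2 ≤ d → ∀ i j : Fin d, i ≠ j → r ≤ (i : ℕ) → r ≤ (j : ℕ) →
      (d : ℝ) * ∫ U,
          ((star (U : Matrix (Fin d) (Fin d) ℂ) * rhoR d r * (U : Matrix (Fin d) (Fin d) ℂ)) k k).re *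
          ((((d : ℝ) + 1) * ‖(U : Matrix (Fin d) (Fin d) ℂ) i k‖ ^ 2 - 1) *
            (((d : ℝ) + 1) * ‖(U : Matrix (Fin d) (Fin d) ℂ) j k‖ ^ 2 - 1)) ∂μ
        = -1 / ((d : ℝ) + 2)) :=
  covariant_ls_C_diagonal_variance_covariance_general d r hr hrd μ hμ k
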